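/- arXiv:2004.01989 — 3 statements merged into one kernel-verified Lean document; each statement's English description precedes it below -/
import Mathlib

section
/- Let c ∈ ℝ and suppose the level set 𝓛_c(f) = f⁻¹(c) is nonempty and R(f)(x) ≠ 0 for all x ∈ 𝓛_c(f). Then ω_c := −d(i_c* η) is a symplectic form on 𝓛_c(f), where i_c: 𝓛_c(f) ↪ M is the inclusion. -/
/- STATEMENT 10: If the level set 𝓛_c(f) = f⁻¹(c) is nonempty and R(f) ≠ 0 on it,
   then ω_c = −d(i_c* η) is a symplectic form on 𝓛_c(f).
   Realized on ℝ^{2n+1} with η = dS − p_i dq^i, R = ∂/∂S.  Since d(i_c*η) = i_c*(dη),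
   ω_c is the restriction of −dη to the tangent spaces ker(df_x) of the level set;
   it is automatically closed (restriction of the exact constant-coefficient form −dη),
   and being symplectic amounts to skew-symmetry and nondegeneracy on each tangent
   space ker(df_x). -/

noncomputable section

abbrev Vn (n : ℕ) : Type := (Fin n → ℝ) × (Fin n → ℝ) × ℝ

def dEta (n : ℕ) (u v : Vn n) : ℝ := ∑ i : Fin n, (u.1 i * v.2.1 i - u.2.1 i * v.1 i)

def ES (n : ℕ) : Vn n := (0, 0, 1)

/-- R(f) = ∂f/∂S -/
def Rf (n : ℕ) (f : Vn n → ℝ) (x : Vn n) : ℝ := fderiv ℝ f x (ES n)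

theorem level_set_symplectic (n : ℕ) (f : Vn n → ℝ) (hf : ContDiff ℝ (⊤ : ℕ∞) f) (c : ℝ)
    (hne : ∃ x : Vn n, f x = c)
    (hR : ∀ x : Vn n, f x = c → Rf n f x ≠ 0) :
    ∀ x : Vn n, f x = c →
      -- ω_c = −dη restricted to T_x𝓛_c(f) = ker(df_x) is skew-symmetric …
      (∀ u v : Vn n, fderiv ℝ f x u = 0 → fderiv ℝ f x v = 0 →
        -dEta n u v = -(- dEta n v u)) ∧
      -- … and nondegenerate, hence symplectic
      (∀ u : Vn n, fderiv ℝ f x u = 0 →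
        (∀ v : Vn n, fderiv ℝ f x v = 0 → -dEta n u v = 0) → u = 0) := by
  intro x hx
  have hES : fderiv ℝ f x (ES n) ≠ 0 := hR x hx
  constructor
  · intro u v _ _
    have h : dEta n v u = -dEta n u v := by
      unfold dEta
      rw [← Finset.sum_neg_distrib]
      exact Finset.sum_congr rfl (fun i _ => by ring)
    rw [h]; ring
  · intro u hu hdeg
    have hall : ∀ w : Vn n, dEta n u w = 0 := by
      intro w
      set t := fderiv ℝ f x w / fderiv ℝ f x (ES n) with ht
      have hv : fderiv ℝ f x (w - t • ES n) = 0 := by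
        rw [map_sub, map_smul, ht, smul_eq_mul]
        field_simp
        ring
      have h0 := hdeg (w - t • ES n) hv
      have hlin : dEta n u (w - t • ES n) = dEta n u w := by
        unfold dEta ES
        refine Finset.sum_congr rfl (fun i _ => ?_)
        simp [Prod.smul_def]
      rw [hlin] at h0
      linarith
    have hw := hall (u.2.1, -u.1, 0)
    have hsq : ∑ i : Fin n, (u.1 i ^ 2 + u.2.1 i ^ 2) = 0 := by
      unfold dEta at hw
      have : ∑ i : Fin n, (u.1 i * (-u.1) i - u.2.1 i * u.2.1 i)
          = -∑ i : Fin n, (u.1 i ^ 2 + u.2.1 i ^ 2) := by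
        rw [← Finset.sum_neg_distrib]
        exact Finset.sum_congr rfl (fun i _ => by simp; ring)
      rw [this] at hw
      linarith
    have hterm : ∀ i : Fin n, u.1 i ^ 2 + u.2.1 i ^ 2 = 0 := by
      intro i
      have := Finset.sum_eq_zero_iff_of_nonneg
        (fun i _ => by positivity : ∀ i ∈ Finset.univ, (0:ℝ) ≤ u.1 i ^ 2 + u.2.1 i ^ 2)
      exact (this.mp hsq) i (Finset.mem_univ i)
    have h1 : u.1 = 0 := by
      funext i
      have := hterm i
      simp only [Pi.zero_apply]
      nlinarith [sq_nonneg (u.1 i), sq_nonneg (u.2.1 i)]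
    have h2 : u.2.1 = 0 := by
      funext i
      have := hterm i
      simp only [Pi.zero_apply]
      nlinarith [sq_nonneg (u.1 i), sq_nonneg (u.2.1 i)]
    have hu' : u = u.2.2 • ES n := by
      unfold ES
      ext <;> simp [h1, h2, Prod.smul_def]
    rw [hu', map_smul, smul_eq_mul] at hu
    have h3 : u.2.2 = 0 := by
      rcases mul_eq_zero.mp hu with h | h
      · exact h
      · exact absurd h hES
    rw [hu', h3, zero_smul]
end
end

section
/- Under the hypotheses that R(f) ≠ 0 on the level set 𝓛_c(f), the restriction of the evolution vector field satisfies 𝓔_f|_{𝓛_c(f)} = R(f)|_{𝓛_c(f)} · Δ_c, where Δ_c is the Liouville vector field of the exact symplectic manifold (𝓛_c(f), ω_c = −d i_c*η), defined by i_{Δ_c} ω_c = i_c* η. -/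
/- STATEMENT 11: If R(f) ≠ 0 on 𝓛_c(f) = f⁻¹(c), then 𝓔_f|_{𝓛_c(f)} = R(f)·Δ_c,
   where Δ_c is the Liouville vector field of (𝓛_c(f), ω_c = −d i_c*η), defined by
   i_{Δ_c} ω_c = i_c* η.  Realized on ℝ^{2n+1} with η = dS − p_i dq^i; tangent
   vectors to the level set at x are those in ker(df_x), and ω_c is the restriction
   of −dη there. -/

noncomputable section

def eta (n : ℕ) (x v : Vn n) : ℝ := v.2.2 - ∑ i : Fin n, x.2.1 i * v.1 i
def Eq' (n : ℕ) (i : Fin n) : Vn n := (Pi.single i 1, 0, 0)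
def Ep (n : ℕ) (i : Fin n) : Vn n := (0, Pi.single i 1, 0)
def pdq (n : ℕ) (f : Vn n → ℝ) (x : Vn n) (i : Fin n) : ℝ := fderiv ℝ f x (Eq' n i)
def pdp (n : ℕ) (f : Vn n → ℝ) (x : Vn n) (i : Fin n) : ℝ := fderiv ℝ f x (Ep n i)
def pdS (n : ℕ) (f : Vn n → ℝ) (x : Vn n) : ℝ := fderiv ℝ f x (ES n)

/-- the evolution vector field 𝓔_f in canonical coordinates -/
def Ef (n : ℕ) (f : Vn n → ℝ) (x : Vn n) : Vn n :=
  (fun i => pdp n f x i,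
   fun i => -(pdq n f x i + x.2.1 i * pdS n f x),
   ∑ i : Fin n, x.2.1 i * pdp n f x i)

theorem evolution_is_Rf_times_Liouville (n : ℕ) (f : Vn n → ℝ)
    (hf : ContDiff ℝ (⊤ : ℕ∞) f) (c : ℝ)
    (hne : ∃ x : Vn n, f x = c)
    (hR : ∀ x : Vn n, f x = c → pdS n f x ≠ 0) :
    ∀ x : Vn n, f x = c →
      ∀ Δc : Vn n,
        fderiv ℝ f x Δc = 0 →                                    -- Δ_c is tangent to 𝓛_c(f)
        (∀ v : Vn n, fderiv ℝ f x v = 0 → -dEta n Δc v = eta n x v) →  -- i_{Δ_c} ω_c = i_c*η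
        Ef n f x = pdS n f x • Δc := by
  intro x hx Δ hΔtan hΔ
  set r := pdS n f x with hr
  have hr0 : r ≠ 0 := hR x hx
  -- tangent test vectors
  have key : ∀ (e : Vn n), (fderiv ℝ f x) e = 0 → -dEta n Δ e = eta n x e := hΔ
  -- component A
  have hA : ∀ i, Δ.1 i = pdp n f x i / r := by
    intro i
    set v : Vn n := Ep n i + (-(pdp n f x i / r)) • ES n with hv
    have hvtan : fderiv ℝ f x v = 0 := by
      rw [hv, map_add, map_smul]
      show pdp n f x i + (-(pdp n f x i / r)) • r = 0
      rw [smul_eq_mul, neg_mul, div_mul_cancel₀ _ hr0, add_neg_cancel]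
    have hveq : v = (0, Pi.single i 1, -(pdp n f x i / r)) := by
      simp [hv, Ep, ES, Prod.ext_iff, Prod.smul_def]
    have h1 := key v hvtan
    rw [hveq] at h1
    have hd : dEta n Δ (0, Pi.single i 1, -(pdp n f x i / r)) = Δ.1 i := by
      simp [dEta, Pi.single_apply, mul_ite, Finset.sum_ite_eq']
    have he : eta n x (0, Pi.single i 1, -(pdp n f x i / r)) = -(pdp n f x i / r) := by
      simp [eta]
    rw [hd, he] at h1
    linarith
  -- component B
  have hB : ∀ i, Δ.2.1 i = -(pdq n f x i / r) - x.2.1 i := by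
    intro i
    set v : Vn n := Eq' n i + (-(pdq n f x i / r)) • ES n with hv
    have hvtan : fderiv ℝ f x v = 0 := by
      rw [hv, map_add, map_smul]
      show pdq n f x i + (-(pdq n f x i / r)) • r = 0
      rw [smul_eq_mul, neg_mul, div_mul_cancel₀ _ hr0, add_neg_cancel]
    have hveq : v = (Pi.single i 1, 0, -(pdq n f x i / r)) := by
      simp [hv, Eq', ES, Prod.ext_iff, Prod.smul_def]
    have h1 := key v hvtan
    rw [hveq] at h1
    have hd : dEta n Δ (Pi.single i 1, 0, -(pdq n f x i / r)) = -(Δ.2.1 i) := by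
      simp [dEta, Pi.single_apply, mul_ite, Finset.sum_ite_eq']
    have he : eta n x (Pi.single i 1, 0, -(pdq n f x i / r))
        = -(pdq n f x i / r) - x.2.1 i := by
      simp [eta, Pi.single_apply, mul_ite, Finset.sum_ite_eq']
    rw [hd, he] at h1
    linarith
  -- component S : from η(x,Δ) = 0
  have hS : Δ.2.2 = ∑ j : Fin n, x.2.1 j * Δ.1 j := by
    have h1 := key Δ hΔtan
    have hd : dEta n Δ Δ = 0 := by simp [dEta, mul_comm]
    rw [hd] at h1
    simp only [neg_zero, eta] at h1
    linarith [h1.symm]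
  -- conclude
  refine Prod.ext ?_ (Prod.ext ?_ ?_)
  · funext i
    show pdp n f x i = r * Δ.1 i
    rw [hA i]; field_simp
  · funext i
    show -(pdq n f x i + x.2.1 i * r) = r * Δ.2.1 i
    rw [hB i]; field_simp; ring
  · show ∑ i : Fin n, x.2.1 i * pdp n f x i = r * Δ.2.2
    rw [hS, Finset.mul_sum]
    refine Finset.sum_congr rfl fun j _ => ?_
    rw [hA j]; field_simp
end
end

section
/- If H(q, p, S) = (1/2) g^{ij} p_i p_j + V(q, S) with (g^{ij}) a positive semi-definite symmetric matrix, then along integral curves of the evolution vector field 𝓔_H: (i) dH/dt = 0 (first law) and (ii) dS/dt = Σ_{i,j} g^{ij} p_i p_j ≥ 0 (second law). -/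
/-!
Since g is symmetric, the kinetic energy ½ gⁱʲ pᵢ pⱼ changes at the rate Σᵢ ṗᵢ q̇ⁱ, while the
potential changes at the rate Σᵢ q̇ⁱ ∂V/∂qⁱ + Ṡ ∂V/∂S. Substituting ṗᵢ = −∂V/∂qⁱ − pᵢ ∂V/∂S and
Ṡ = Σᵢ pᵢ q̇ⁱ, the two rates cancel. The second law is Ṡ = gⁱʲ pᵢ pⱼ together with positive
semidefiniteness of g.
-/

noncomputable section

/-- ∂V/∂q_i at (q,S) -/
def pVq (n : ℕ) (V : (Fin n → ℝ) × ℝ → ℝ) (q : Fin n → ℝ) (S : ℝ) (i : Fin n) : ℝ :=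
  fderiv ℝ V (q, S) (Pi.single i 1, 0)

/-- ∂V/∂S at (q,S) -/
def pVS (n : ℕ) (V : (Fin n → ℝ) × ℝ → ℝ) (q : Fin n → ℝ) (S : ℝ) : ℝ :=
  fderiv ℝ V (q, S) (0, 1)

open Finset

theorem ContinuousLinearMap.apply_pi_prod_eq_sum {ι : Type*} [Fintype ι] [DecidableEq ι]
    (L : (ι → ℝ) × ℝ →L[ℝ] ℝ) (v : ι → ℝ) (r : ℝ) :
    L (v, r) = ∑ i, v i * L (Pi.single i 1, 0) + r * L (0, 1) := by
  have hv : ((v, r) : (ι → ℝ) × ℝ) = ∑ i, v i • (Pi.single i 1, 0) + r • (0, 1) := by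
    ext <;> simp [Prod.fst_sum, Prod.snd_sum, Finset.sum_apply, Pi.single_apply]
  rw [hv, map_add, map_sum]
  simp only [map_smul, smul_eq_mul]

theorem fderiv_apply_eq_sum_pVq_add_pVS (n : ℕ) (V : (Fin n → ℝ) × ℝ → ℝ) (q : Fin n → ℝ)
    (S : ℝ) (v : Fin n → ℝ) (r : ℝ) :
    fderiv ℝ V (q, S) (v, r) = ∑ i, v i * pVq n V q S i + r * pVS n V q S :=
  (fderiv ℝ V (q, S)).apply_pi_prod_eq_sum v r

theorem hasDerivAt_sum_sum_mul_mul {ι : Type*} [Fintype ι] {g : ι → ι → ℝ}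
    (hsymm : ∀ i j, g i j = g j i) {p : ℝ → ι → ℝ} {p' : ι → ℝ} {t : ℝ}
    (hp : ∀ i, HasDerivAt (fun s => p s i) (p' i) t) :
    HasDerivAt (fun s => ∑ i, ∑ j, g i j * p s i * p s j)
      (2 * ∑ i, p' i * ∑ j, g i j * p t j) t := by
  have hswap : ∑ i, ∑ j, g i j * p t i * p' j = ∑ i, ∑ j, g i j * p' i * p t j := by
    rw [sum_comm]
    refine sum_congr rfl fun i _ => sum_congr rfl fun j _ => ?_
    rw [hsymm]
    ring
  refine (HasDerivAt.fun_sum fun i _ => HasDerivAt.fun_sum fun j _ =>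
    ((hp i).const_mul (g i j)).fun_mul (hp j)).congr_deriv ?_
  simp only [sum_add_distrib, hswap, ← two_mul, mul_sum]
  exact sum_congr rfl fun i _ => sum_congr rfl fun j _ => by ring

theorem hasDerivAt_comp_prodMk {n : ℕ} {V : (Fin n → ℝ) × ℝ → ℝ} {q : ℝ → Fin n → ℝ}
    {S : ℝ → ℝ} {q' : Fin n → ℝ} {S' t : ℝ} (hV : DifferentiableAt ℝ V (q t, S t))
    (hq : ∀ i, HasDerivAt (fun s => q s i) (q' i) t) (hS : HasDerivAt S S' t) :
    HasDerivAt (fun s => V (q s, S s))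
      (∑ i, q' i * pVq n V (q t) (S t) i + S' * pVS n V (q t) (S t)) t := by
  rw [← fderiv_apply_eq_sum_pVq_add_pVS]
  exact hV.hasFDerivAt.comp_hasDerivAt t ((hasDerivAt_pi.mpr hq).prodMk hS)

theorem two_laws_of_thermodynamics (n : ℕ)
    (g : Fin n → Fin n → ℝ)
    (hsymm : ∀ i j, g i j = g j i)
    (hpsd : ∀ v : Fin n → ℝ, 0 ≤ ∑ i, ∑ j, v i * g i j * v j)
    (V : (Fin n → ℝ) × ℝ → ℝ) (hV : Differentiable ℝ V)
    (q : ℝ → Fin n → ℝ) (p : ℝ → Fin n → ℝ) (S : ℝ → ℝ)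
    -- the evolution dynamics of H(q,p,S) = (1/2) Σ g^{ij} p_i p_j + V(q,S):
    (hq : ∀ t i, HasDerivAt (fun s => q s i) (∑ j, g i j * p t j) t)
    (hp : ∀ t i, HasDerivAt (fun s => p s i)
            (-(pVq n V (q t) (S t) i) - p t i * pVS n V (q t) (S t)) t)
    (hS : ∀ t, HasDerivAt S (∑ i, p t i * ∑ j, g i j * p t j) t) :
    -- (i) first law: conservation of total energy
    (∀ t, deriv (fun s =>
        (1/2) * ∑ i, ∑ j, g i j * p s i * p s j + V (q s, S s)) t = 0) ∧
    -- (ii) second law: dS/dt = Σ g^{ij} p_i p_j ≥ 0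
    (∀ t, deriv S t = ∑ i, ∑ j, p t i * g i j * p t j ∧ 0 ≤ deriv S t) := by
  refine ⟨fun t => ?_, fun t => ?_⟩
  · have hkinetic := (hasDerivAt_sum_sum_mul_mul hsymm (hp t)).const_mul (1 / 2 : ℝ)
    have hpotential := hasDerivAt_comp_prodMk (hV (q t, S t)) (hq t) (hS t)
    rw [(hkinetic.fun_add hpotential).deriv]
    set a := pVq n V (q t) (S t)
    set b := pVS n V (q t) (S t)
    simp only [sub_mul, neg_mul, sum_sub_distrib, sum_neg_distrib, mul_right_comm _ b, ← sum_mul,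
      mul_comm (a _)]
    ring
  · have hquad : ∑ i, p t i * ∑ j, g i j * p t j = ∑ i, ∑ j, p t i * g i j * p t j := by
      simp only [mul_sum, mul_assoc]
    rw [(hS t).deriv, hquad]
    exact ⟨rfl, hpsd (p t)⟩
end
end
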